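/- arXiv:2007.11441 — 17 statements merged into one kernel-verified Lean document; each statement's English description precedes it below -/
import Mathlib

section
/- Let g be a Leibniz algebra, (V, ρ^L, ρ^R) a representation of g, N : g → g and S : V → V linear maps. Then (N, S*) is a dual-Nijenhuis pair for the dual representation (V*, (ρ^L)*, −(ρ^L)* − (ρ^R)*) if and only if (N, S) is a Nijenhuis pair for the representation (V, ρ^L, ρ^R). Here S* : V* → V* is the transpose of S. -/
section LeibnizDefs

variable {g V : Type*}

/-- The (left) Leibniz identity for a bracket. -/
def LeibnizId [AddCommGroup g] (b : g → g → g) : Prop :=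
  ∀ x y z, b x (b y z) = b (b x y) z + b y (b x z)

/-- The identities defining a representation of a Leibniz algebra. -/
def RepId [AddCommGroup g] [AddCommGroup V] (b : g → g → g) (ρL ρR : g → V → V) : Prop :=
  (∀ x y w, ρL (b x y) w = ρL x (ρL y w) - ρL y (ρL x w)) ∧
  (∀ x y w, ρR (b x y) w = ρL x (ρR y w) - ρR y (ρL x w)) ∧
  (∀ x y w, ρR y (ρL x w) = -(ρR y (ρR x w)))

/-- Nijenhuis operator on a Leibniz algebra. -/
def NijenhuisOn [AddCommGroup g] (b : g → g → g) (N : g → g) : Prop :=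
  ∀ x y, b (N x) (N y) = N (b (N x) y + b x (N y) - N (b x y))

/-- Nijenhuis pair for a representation. -/
def NijPair [AddCommGroup g] [AddCommGroup V] (b : g → g → g) (ρL ρR : g → V → V)
    (N : g → g) (S : V → V) : Prop :=
  NijenhuisOn b N ∧
  (∀ y w, ρL (N y) (S w) = S (ρL (N y) w) + S (ρL y (S w)) - S (S (ρL y w))) ∧
  (∀ y w, ρR (N y) (S w) = S (ρR (N y) w) + S (ρR y (S w)) - S (S (ρR y w)))

/-- Dual-Nijenhuis pair for a representation. -/
def DualNijPair [AddCommGroup g] [AddCommGroup V] (b : g → g → g) (ρL ρR : g → V → V)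
    (N : g → g) (S : V → V) : Prop :=
  NijenhuisOn b N ∧
  (∀ y w, ρL (N y) (S w) = S (ρL (N y) w) + ρL y (S (S w)) - S (ρL y (S w))) ∧
  (∀ y w, ρR (N y) (S w) = S (ρR (N y) w) + ρR y (S (S w)) - S (ρR y (S w)))

/-- Kupershmidt operator for a representation. -/
def Kupershmidt [AddCommGroup g] [AddCommGroup V] (b : g → g → g) (ρL ρR : g → V → V)
    (K : V → g) : Prop :=
  ∀ u v, b (K u) (K v) = K (ρL (K u) v + ρR (K v) u)

/-- The sub-adjacent bracket `[u,v]^K` on `V`. -/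
def kbr [AddCommGroup g] [AddCommGroup V] (ρL ρR : g → V → V) (K : V → g) (u v : V) : V :=
  ρL (K u) v + ρR (K v) u

/-- KN-structure for a representation. -/
def KNStructure [AddCommGroup g] [AddCommGroup V] (b : g → g → g) (ρL ρR : g → V → V)
    (K : V → g) (S : V → V) (N : g → g) : Prop :=
  Kupershmidt b ρL ρR K ∧ NijPair b ρL ρR N S ∧ (∀ v, N (K v) = K (S v)) ∧
  (∀ w u, ρL (N (K w)) u + ρR (N (K u)) w =
    kbr ρL ρR K (S w) u + kbr ρL ρR K w (S u) - S (kbr ρL ρR K w u))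

/-- Dual KN-structure for a representation. -/
def DualKNStructure [AddCommGroup g] [AddCommGroup V] (b : g → g → g) (ρL ρR : g → V → V)
    (K : V → g) (S : V → V) (N : g → g) : Prop :=
  Kupershmidt b ρL ρR K ∧ DualNijPair b ρL ρR N S ∧ (∀ v, N (K v) = K (S v)) ∧
  (∀ w u, ρL (N (K w)) u + ρR (N (K u)) w =
    kbr ρL ρR K (S w) u + kbr ρL ρR K w (S u) - S (kbr ρL ρR K w u))

/-- Compatibility of two Kupershmidt operators: every linear combination is again
a Kupershmidt operator. -/
def Compatible (k : Type*) {g V : Type*} [Field k] [AddCommGroup g] [Module k g]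
    [AddCommGroup V] [Module k V] (b : g → g → g) (ρL ρR : g → V → V)
    (K₁ K₂ : V → g) : Prop :=
  ∀ n₁ n₂ : k, Kupershmidt b ρL ρR fun v => n₁ • K₁ v + n₂ • K₂ v

end LeibnizDefs

private lemma dual_sep {k V : Type*} [Field k] [AddCommGroup V] [Module k V] {v u : V}
    (h : ∀ φ : Module.Dual k V, φ v = φ u) : v = u := by
  rw [← sub_eq_zero, ← Module.forall_dual_apply_eq_zero_iff k (v - u)]
  intro φ
  simp [h φ]

theorem statement1
    {k g V : Type*} [Field k] [AddCommGroup g] [Module k g]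
    [AddCommGroup V] [Module k V]
    (b : g →ₗ[k] g →ₗ[k] g) (hb : LeibnizId fun x y => b x y)
    (ρL ρR : g →ₗ[k] V →ₗ[k] V)
    (hrep : RepId (fun x y => b x y) (fun x w => ρL x w) (fun x w => ρR x w))
    (N : g →ₗ[k] g) (S : V →ₗ[k] V) :
    DualNijPair (fun x y => b x y)
      (fun x (α : Module.Dual k V) => (ρL x).dualMap α)
      (fun x (α : Module.Dual k V) => -((ρL x).dualMap α) - (ρR x).dualMap α)
      ⇑N (fun α => S.dualMap α) ↔
    NijPair (fun x y => b x y) (fun x w => ρL x w) (fun x w => ρR x w) ⇑N ⇑S := by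

  constructor
  · rintro ⟨hN, hL, hR⟩
    have pL : ∀ y w, ρL (N y) (S w)
        = S (ρL (N y) w) + S (ρL y (S w)) - S (S (ρL y w)) := by
      intro y w
      apply dual_sep (k := k)
      intro φ
      have h := LinearMap.congr_fun (hL y φ) w
      simp only [LinearMap.dualMap_apply, LinearMap.add_apply, LinearMap.sub_apply] at h
      simp only [map_add, map_sub]
      linear_combination -h
    refine ⟨hN, pL, ?_⟩
    intro y w
    apply dual_sep (k := k)
    intro φ
    have h1 := LinearMap.congr_fun (hL y φ) w
    have h2 := LinearMap.congr_fun (hR y φ) w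
    simp only [LinearMap.dualMap_apply, LinearMap.add_apply, LinearMap.sub_apply,
      LinearMap.neg_apply] at h1 h2
    simp only [map_add, map_sub]
    linear_combination h1 + h2
  · rintro ⟨hN, hL, hR⟩
    refine ⟨hN, ?_, ?_⟩
    · intro y α
      ext w
      have h := congrArg α (hL y w)
      simp only [map_add, map_sub] at h
      simp only [LinearMap.dualMap_apply, LinearMap.add_apply, LinearMap.sub_apply]
      linear_combination -h
    · intro y α
      ext w
      have h1 := congrArg α (hL y w)
      have h2 := congrArg α (hR y w)
      simp only [map_add, map_sub] at h1 h2
      simp only [LinearMap.dualMap_apply, LinearMap.add_apply, LinearMap.sub_apply,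
        LinearMap.neg_apply]
      linear_combination h1 + h2
end

section
/- Let (g₁, g₂, ρ₁^L, ρ₁^R, ρ₂^L, ρ₂^R) be a matched pair of Leibniz algebras. Let (N,S) be a Nijenhuis pair on g₁ with respect to the representation (g₂, ρ₁^L, ρ₁^R), and (S,N) a Nijenhuis pair on g₂ with respect to the representation (g₁, ρ₂^L, ρ₂^R). Then the map N + S : g₁ ⊕ g₂ → g₁ ⊕ g₂, (x,a) ↦ (N(x), S(a)), is a Nijenhuis operator on the twilled Leibniz algebra g₁ ⋈ g₂. -/
theorem statement2
    {k g₁ g₂ : Type*} [Field k] [AddCommGroup g₁] [Module k g₁]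
    [AddCommGroup g₂] [Module k g₂]
    (b₁ : g₁ →ₗ[k] g₁ →ₗ[k] g₁) (b₂ : g₂ →ₗ[k] g₂ →ₗ[k] g₂)
    (hb₁ : LeibnizId fun x y => b₁ x y) (hb₂ : LeibnizId fun a c => b₂ a c)
    (ρ₁L ρ₁R : g₁ →ₗ[k] g₂ →ₗ[k] g₂) (ρ₂L ρ₂R : g₂ →ₗ[k] g₁ →ₗ[k] g₁)
    (hrep₁ : RepId (fun x y => b₁ x y) (fun x a => ρ₁L x a) (fun x a => ρ₁R x a))
    (hrep₂ : RepId (fun a c => b₂ a c) (fun a x => ρ₂L a x) (fun a x => ρ₂R a x))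
    (hmatch : LeibnizId (fun p q : g₁ × g₂ =>
      (b₁ p.1 q.1 + ρ₂L p.2 q.1 + ρ₂R q.2 p.1,
       b₂ p.2 q.2 + ρ₁L p.1 q.2 + ρ₁R q.1 p.2)))
    (N : g₁ →ₗ[k] g₁) (S : g₂ →ₗ[k] g₂)
    (hNS : NijPair (fun x y => b₁ x y) (fun x a => ρ₁L x a) (fun x a => ρ₁R x a) ⇑N ⇑S)
    (hSN : NijPair (fun a c => b₂ a c) (fun a x => ρ₂L a x) (fun a x => ρ₂R a x) ⇑S ⇑N) :
    NijenhuisOn (fun p q : g₁ × g₂ =>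
      (b₁ p.1 q.1 + ρ₂L p.2 q.1 + ρ₂R q.2 p.1,
       b₂ p.2 q.2 + ρ₁L p.1 q.2 + ρ₁R q.1 p.2))
      (fun p => (N p.1, S p.2)) := by
  obtain ⟨hN, hL1, hR1⟩ := hNS
  obtain ⟨hS, hL2, hR2⟩ := hSN
  simp only [NijenhuisOn] at hN hS
  beta_reduce at hN hS hL1 hR1 hL2 hR2
  rintro ⟨x, a⟩ ⟨y, c⟩
  simp only [Prod.mk.injEq, Prod.mk_add_mk, Prod.mk_sub_mk]
  constructor
  · rw [hN x y, hL2 a y, hR2 c x]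
    simp only [map_add, map_sub]
    abel
  · rw [hS a c, hL1 x c, hR1 y a]
    simp only [map_add, map_sub]
    abel
end

section
/- Let (N,S) be a Nijenhuis pair for a representation (V, ρ^L, ρ^R) of a Leibniz algebra g. Define ρ̂^L(y) = ρ^L(N(y)) + ρ^L(y)∘S − S∘ρ^L(y) and ρ̂^R(y) = ρ^R(N(y)) + ρ^R(y)∘S − S∘ρ^R(y). Then the deformed bracket [x,y]_N = [N(x),y] + [x,N(y)] − N([x,y]) makes g a Leibniz algebra, and (V, ρ̂^L, ρ̂^R) is a representation of the Leibniz algebra (g, [·,·]_N). -/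
lemma nij_leibniz' {k h : Type*} [Field k] [AddCommGroup h] [Module k h]
    (b : h →ₗ[k] h →ₗ[k] h) (hb : LeibnizId fun x y => b x y)
    (N : h →ₗ[k] h) (hN : NijenhuisOn (fun x y => b x y) N) :
    LeibnizId fun x y => b (N x) y + b x (N y) - N (b x y) := by
  intro x y z
  have hN' : ∀ a c, b (N a) (N c) = N (b (N a) c) + N (b a (N c)) - N (N (b a c)) := by
    intro a c
    have := hN a c
    simp only [map_add, map_sub] at this
    exact this
  have hb' : ∀ a c d, b (b a c) d = b a (b c d) - b c (b a d) := by
    intro a c d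
    have := hb a c d
    simp only at this
    rw [this]; abel
  simp only
  rw [show (N (b (N y) z + b y (N z) - N (b y z))) = b (N y) (N z) from (hN y z).symm,
      show (N (b (N x) y + b x (N y) - N (b x y))) = b (N x) (N y) from (hN x y).symm,
      show (N (b (N x) z + b x (N z) - N (b x z))) = b (N x) (N z) from (hN x z).symm]
  simp only [map_add, map_sub, LinearMap.add_apply, LinearMap.sub_apply]
  rw [hN' x (b y z), hN' y (b x z), hN' (b x y) z]
  simp only [hb', map_add, map_sub]
  abel

lemma sub_aux' {M : Type*} [AddCommGroup M] {P Q R : M} (h : P = Q + R) : Q = P - R := by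
  rw [h]; abel

lemma sub_aux2' {M : Type*} [AddCommGroup M] {P Q R : M} (h : P = R + Q) : Q = P - R := by
  rw [h]; abel

lemma neg_aux' {M : Type*} [AddCommGroup M] {Rb L R1 R2 : M}
    (E1 : L = R1 + Rb) (E2 : Rb = R2 + L) : R1 = -R2 := by
  have h : R1 = L - Rb := sub_aux' E1
  rw [h, E2]; abel


theorem statement3
    {k g V : Type*} [Field k] [AddCommGroup g] [Module k g]
    [AddCommGroup V] [Module k V]
    (b : g →ₗ[k] g →ₗ[k] g) (hb : LeibnizId fun x y => b x y)
    (ρL ρR : g →ₗ[k] V →ₗ[k] V)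
    (hrep : RepId (fun x y => b x y) (fun x w => ρL x w) (fun x w => ρR x w))
    (N : g →ₗ[k] g) (S : V →ₗ[k] V)
    (hNS : NijPair (fun x y => b x y) (fun x w => ρL x w) (fun x w => ρR x w) ⇑N ⇑S) :
    LeibnizId (fun x y => b (N x) y + b x (N y) - N (b x y)) ∧
    RepId (fun x y => b (N x) y + b x (N y) - N (b x y))
      (fun x w => ρL (N x) w + ρL x (S w) - S (ρL x w))
      (fun x w => ρR (N x) w + ρR x (S w) - S (ρR x w)) := by
  obtain ⟨hrep1, hrep2, hrep3⟩ := hrep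
  obtain ⟨hN, hSL, hSR⟩ := hNS
  simp only at hrep1 hrep2 hrep3 hSL hSR
  -- semidirect product bracket on g × V
  set B : (g × V) →ₗ[k] (g × V) →ₗ[k] (g × V) :=
    LinearMap.mk₂ k (fun p q => (b p.1 q.1, ρL p.1 q.2 + ρR q.1 p.2))
      (by intro p p' q; simp [Prod.ext_iff]; abel)
      (by intro c p q; simp [Prod.ext_iff, smul_add])
      (by intro p q q'; simp [Prod.ext_iff]; abel)
      (by intro c p q; simp [Prod.ext_iff, smul_add]) with hBdef
  set NS : (g × V) →ₗ[k] (g × V) := N.prodMap S with hNSdef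
  have hBapp : ∀ (x y : g) (u v : V), B (x, u) (y, v) = (b x y, ρL x v + ρR y u) := by
    intro x y u v; rw [hBdef]; simp
  have hNSapp : ∀ (x : g) (u : V), NS (x, u) = (N x, S u) := by
    intro x u; rw [hNSdef]; simp
  have hBleib : LeibnizId fun p q => B p q := by
    rintro ⟨x, u⟩ ⟨y, v⟩ ⟨z, w⟩
    simp only [hBapp, Prod.mk_add_mk, Prod.mk.injEq]
    refine ⟨hb x y z, ?_⟩
    simp only [map_add]
    rw [hrep1 x y w, hrep2 x z v, hrep2 y z u, hrep3 y z u]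
    abel
  have hBnij : NijenhuisOn (fun p q => B p q) NS := by
    rintro ⟨x, u⟩ ⟨y, v⟩
    simp only [hNSapp, hBapp, Prod.mk_add_mk, Prod.mk_sub_mk, Prod.mk.injEq]
    refine ⟨hN x y, ?_⟩
    rw [hSL x v, hSR y u]
    simp only [map_add, map_sub]
    abel
  have hD := nij_leibniz' B hBleib NS hBnij
  have hcomm : ∀ (y : g) (w : V), ρR y (S w) + ρR (N y) w = ρR (N y) w + ρR y (S w) :=
    fun _ _ => add_comm _ _
  refine ⟨nij_leibniz' b hb N hN, ?_, ?_, ?_⟩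
  · intro x y w
    have E0 := hD (x, 0) (y, 0) (0, w)
    simp only [hNSapp, hBapp, map_zero, LinearMap.zero_apply, Prod.mk_add_mk, Prod.mk_sub_mk,
      add_zero, zero_add, sub_zero, Prod.mk.injEq, and_true, true_and, eq_self_iff_true] at E0
    simp only
    exact sub_aux' E0
  · intro x y w
    have E1 := hD (x, 0) (0, w) (y, 0)
    have E2 := hD (0, w) (x, 0) (y, 0)
    simp only [hNSapp, hBapp, map_zero, LinearMap.zero_apply, Prod.mk_add_mk, Prod.mk_sub_mk,
      add_zero, zero_add, sub_zero, Prod.mk.injEq, and_true, true_and, eq_self_iff_true] at E1 E2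
    simp only [hcomm] at E1 E2
    simp only
    exact sub_aux2' E1
  · intro x y w
    have E1 := hD (x, 0) (0, w) (y, 0)
    have E2 := hD (0, w) (x, 0) (y, 0)
    simp only [hNSapp, hBapp, map_zero, LinearMap.zero_apply, Prod.mk_add_mk, Prod.mk_sub_mk,
      add_zero, zero_add, sub_zero, Prod.mk.injEq, and_true, true_and, eq_self_iff_true] at E1 E2
    simp only [hcomm] at E1 E2
    simp only
    exact neg_aux' E1 E2
end

section
/- Let (N,S) be a dual-Nijenhuis pair for a representation (V, ρ^L, ρ^R) of a Leibniz algebra g. Define ρ̃^L(y) = ρ^L(N(y)) + S∘ρ^L(y) − ρ^L(y)∘S and ρ̃^R(y) = ρ^R(N(y)) + S∘ρ^R(y) − ρ^R(y)∘S. Then the deformed bracket [x,y]_N = [N(x),y] + [x,N(y)] − N([x,y]) makes g a Leibniz algebra, and (V, ρ̃^L, ρ̃^R) is a representation of the Leibniz algebra (g, [·,·]_N). -/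
theorem statement4
    {k g V : Type*} [Field k] [AddCommGroup g] [Module k g]
    [AddCommGroup V] [Module k V]
    (b : g →ₗ[k] g →ₗ[k] g) (hb : LeibnizId fun x y => b x y)
    (ρL ρR : g →ₗ[k] V →ₗ[k] V)
    (hrep : RepId (fun x y => b x y) (fun x w => ρL x w) (fun x w => ρR x w))
    (N : g →ₗ[k] g) (S : V →ₗ[k] V)
    (hNS : DualNijPair (fun x y => b x y) (fun x w => ρL x w) (fun x w => ρR x w) ⇑N ⇑S) :
    LeibnizId (fun x y => b (N x) y + b x (N y) - N (b x y)) ∧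
    RepId (fun x y => b (N x) y + b x (N y) - N (b x y))
      (fun x w => ρL (N x) w + S (ρL x w) - ρL x (S w))
      (fun x w => ρR (N x) w + S (ρR x w) - ρR x (S w)) := by

  obtain ⟨hN, hd1, hd2⟩ := hNS
  simp only [LeibnizId, NijenhuisOn, RepId, DualNijPair] at *
  obtain ⟨r1, r2, r3⟩ := hrep
  -- derived oriented rewrite lemmas
  have hb' : ∀ X Y Z : g, b (b X Y) Z = b X (b Y Z) - b Y (b X Z) := by
    intro X Y Z; rw [eq_sub_iff_add_eq, ← hb]
  have hN' : ∀ a c : g, b (N a) (N c) = N (b (N a) c) + N (b a (N c)) - N (N (b a c)) := by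
    intro a c; rw [hN a c]; simp [map_add, map_sub]
  constructor
  · intro x y z
    rw [show (N (b (N y) z + b y (N z) - N (b y z))) = b (N y) (N z) from (hN y z).symm,
        show (N (b (N x) y + b x (N y) - N (b x y))) = b (N x) (N y) from (hN x y).symm,
        show (N (b (N x) z + b x (N z) - N (b x z))) = b (N x) (N z) from (hN x z).symm]
    simp only [map_add, map_sub, LinearMap.add_apply, LinearMap.sub_apply, hN', hb']
    rw [hb (N x) (N y) z, hN' x y]
    simp only [map_add, map_sub, LinearMap.add_apply, LinearMap.sub_apply]
    abel
  refine ⟨?_, ?_, ?_⟩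
  · intro x y w
    rw [show (N (b (N x) y + b x (N y) - N (b x y))) = b (N x) (N y) from (hN x y).symm]
    simp only [map_add, map_sub, LinearMap.add_apply, LinearMap.sub_apply, r1, hd1]
    abel
  · intro x y w
    rw [show (N (b (N x) y + b x (N y) - N (b x y))) = b (N x) (N y) from (hN x y).symm]
    simp only [map_add, map_sub, LinearMap.add_apply, LinearMap.sub_apply, r1, r2, r3, hd1, hd2]
    abel
  · intro x y w
    have aux : ∀ (X Z : g) (W : V), ρR Z (S (ρL (N X) W)) =
        -(ρR Z (S (ρR (N X) W))) + ρR Z (S (ρL X (S W))) + ρR Z (S (ρR X (S W))) := by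
      intro X Z W
      have h1 := congrArg (ρR Z) (hd1 X W)
      have h2 := congrArg (ρR Z) (hd2 X W)
      simp only [map_add, map_sub, r3] at h1 h2
      have hA : ρR Z (S (ρL (N X) W)) = -(ρR Z (ρR (N X) (S W))) +
          ρR Z (ρR X (S (S W))) + ρR Z (S (ρL X (S W))) := by
        rw [h1]; abel
      have hP : -(ρR Z (ρR (N X) (S W))) = -(ρR Z (S (ρR (N X) W)) +
          ρR Z (ρR X (S (S W))) - ρR Z (S (ρR X (S W)))) := by
        rw [h2]
      rw [hA, hP]; abel
    simp only [map_add, map_sub, map_neg, map_smul, LinearMap.add_apply, LinearMap.sub_apply, r1, r2, r3, hd1, hd2,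
      aux]
    abel
end

section
/- Let (K,S,N) be a KN-structure for a representation (V, ρ^L, ρ^R) of a Leibniz algebra g. Then S is a Nijenhuis operator on the sub-adjacent Leibniz algebra (V_K, [·,·]^K), i.e. [S(v),S(w)]^K = S([S(v),w]^K) + S([v,S(w)]^K) − S²([v,w]^K) for all v,w ∈ V. -/
theorem statement5
    {k g V : Type*} [Field k] [AddCommGroup g] [Module k g]
    [AddCommGroup V] [Module k V]
    (b : g →ₗ[k] g →ₗ[k] g) (hb : LeibnizId fun x y => b x y)
    (ρL ρR : g →ₗ[k] V →ₗ[k] V)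
    (hrep : RepId (fun x y => b x y) (fun x w => ρL x w) (fun x w => ρR x w))
    (K : V →ₗ[k] g) (S : V →ₗ[k] V) (N : g →ₗ[k] g)
    (hKN : KNStructure (fun x y => b x y) (fun x w => ρL x w) (fun x w => ρR x w) ⇑K ⇑S ⇑N) :
    NijenhuisOn (kbr (fun x w => ρL x w) (fun x w => ρR x w) ⇑K) ⇑S := by
  obtain ⟨hK, ⟨hN, hL, hR⟩, hNK, h4⟩ := hKN
  intro v w
  simp only [kbr]
  have e1 := hL (K v) w
  have e2 := hR (K w) v
  dsimp only at e1 e2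
  rw [← hNK v, ← hNK w, e1, e2]
  simp only [map_add, map_sub]
  abel
end

section
/- Let (K,S,N) be a dual KN-structure for a representation (V, ρ^L, ρ^R) of a Leibniz algebra g. Then S is a Nijenhuis operator on the sub-adjacent Leibniz algebra (V_K, [·,·]^K), i.e. [S(v),S(w)]^K = S([S(v),w]^K) + S([v,S(w)]^K) − S²([v,w]^K) for all v,w ∈ V. -/
theorem statement6
    {k g V : Type*} [Field k] [AddCommGroup g] [Module k g]
    [AddCommGroup V] [Module k V]
    (b : g →ₗ[k] g →ₗ[k] g) (hb : LeibnizId fun x y => b x y)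
    (ρL ρR : g →ₗ[k] V →ₗ[k] V)
    (hrep : RepId (fun x y => b x y) (fun x w => ρL x w) (fun x w => ρR x w))
    (K : V →ₗ[k] g) (S : V →ₗ[k] V) (N : g →ₗ[k] g)
    (hKN : DualKNStructure (fun x y => b x y) (fun x w => ρL x w) (fun x w => ρR x w) ⇑K ⇑S ⇑N) :
    NijenhuisOn (kbr (fun x w => ρL x w) (fun x w => ρR x w) ⇑K) ⇑S := by
  obtain ⟨hK, ⟨hNij, hL, hR⟩, hNK, h4⟩ := hKN
  -- the key consequence of the fourth condition
  have star : ∀ u w' : V, ρL (K u) (S w') + ρR (K w') (S u)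
      = S (ρL (K u) w') + S (ρR (K w') u) := by
    intro u w'
    have h := h4 u w'
    simp only [kbr, hNK, map_add, map_sub] at h
    linear_combination (norm := abel) - h
  intro v w
  have hLvw := hL (K v) w
  rw [hNK v] at hLvw
  have hstar := star v (S w)
  have h := h4 v w
  simp only [kbr, hNK, map_add, map_sub] at h ⊢
  have hS := congrArg S h
  simp only [map_add, map_sub] at hS
  linear_combination (norm := abel) hLvw + hstar + hS
end

section
/- Let (K,S,N) be a KN-structure (or a dual KN-structure) for a representation (V, ρ^L, ρ^R) of a Leibniz algebra g. Then the composition N∘K : V → g is a Kupershmidt operator for the representation (V, ρ^L, ρ^R). -/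
theorem statement7
    {k g V : Type*} [Field k] [AddCommGroup g] [Module k g]
    [AddCommGroup V] [Module k V]
    (b : g →ₗ[k] g →ₗ[k] g) (hb : LeibnizId fun x y => b x y)
    (ρL ρR : g →ₗ[k] V →ₗ[k] V)
    (hrep : RepId (fun x y => b x y) (fun x w => ρL x w) (fun x w => ρR x w))
    (K : V →ₗ[k] g) (S : V →ₗ[k] V) (N : g →ₗ[k] g)
    (hKN : KNStructure (fun x y => b x y) (fun x w => ρL x w) (fun x w => ρR x w) ⇑K ⇑S ⇑N ∨
           DualKNStructure (fun x y => b x y) (fun x w => ρL x w) (fun x w => ρR x w) ⇑K ⇑S ⇑N) :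
    Kupershmidt (fun x y => b x y) (fun x w => ρL x w) (fun x w => ρR x w) (fun v => N (K v)) := by
  obtain ⟨hK, hP, hNK, hstar⟩ | ⟨hK, hP, hNK, hstar⟩ := hKN <;>
  · have hN := hP.1
    intro u v
    simp only [kbr] at hstar
    calc b (N (K u)) (N (K v))
        = N (b (N (K u)) (K v) + b (K u) (N (K v)) - N (b (K u) (K v))) := hN _ _
      _ = N (K (ρL (N (K u)) v + ρR (N (K v)) u)) := by
          have hK' : ∀ u v, b (K u) (K v) = K (ρL (K u) v + ρR (K v) u) := hK
          rw [hstar u v, hNK u, hNK v, hK' (S u) v, hK' u (S v), hK' u v, hNK]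
          simp [map_add, map_sub]
end

section
/- Let (K,S,N) be a KN-structure for a representation (V, ρ^L, ρ^R) of a Leibniz algebra g, and suppose K is invertible (bijective). Then (N,S) is a dual-Nijenhuis pair, and hence (K,S,N) is a dual KN-structure for (V, ρ^L, ρ^R). -/
theorem statement8
    {k g V : Type*} [Field k] [AddCommGroup g] [Module k g]
    [AddCommGroup V] [Module k V]
    (b : g →ₗ[k] g →ₗ[k] g) (hb : LeibnizId fun x y => b x y)
    (ρL ρR : g →ₗ[k] V →ₗ[k] V)
    (hrep : RepId (fun x y => b x y) (fun x w => ρL x w) (fun x w => ρR x w))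
    (K : V →ₗ[k] g) (S : V →ₗ[k] V) (N : g →ₗ[k] g)
    (hKN : KNStructure (fun x y => b x y) (fun x w => ρL x w) (fun x w => ρR x w) ⇑K ⇑S ⇑N)
    (hK : Function.Bijective ⇑K) :
    DualNijPair (fun x y => b x y) (fun x w => ρL x w) (fun x w => ρR x w) ⇑N ⇑S ∧
    DualKNStructure (fun x y => b x y) (fun x w => ρL x w) (fun x w => ρR x w) ⇑K ⇑S ⇑N := by
  obtain ⟨hKup, ⟨hNijN, hL0, hR0⟩, hNK, hcomp⟩ := hKN
  have hL : ∀ (y : g) (w : V), ρL (N y) (S w)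
      = S (ρL (N y) w) + S (ρL y (S w)) - S (S (ρL y w)) := hL0
  have hR : ∀ (y : g) (w : V), ρR (N y) (S w)
      = S (ρR (N y) w) + S (ρR y (S w)) - S (S (ρR y w)) := hR0
  -- Key identity extracted from the compatibility condition
  have hA : ∀ w u : V, ρR (K u) (S w) + ρL (K w) (S u)
      = S (ρL (K w) u) + S (ρR (K u) w) := by
    intro w u
    have h := hcomp w u
    simp only [kbr, hNK, map_add] at h
    linear_combination (norm := abel) -h
  have keyL : ∀ w u : V,
      S (ρL (K w) (S u)) + S (ρL (K w) (S u))
        = ρL (K w) (S (S u)) + S (S (ρL (K w) u)) := by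
    intro w u
    have e1 := hA w (S u)
    rw [← hNK, hR (K u) w] at e1
    have e2 := congrArg S (hA w u)
    simp only [map_add] at e2
    linear_combination (norm := abel) e2 - e1
  have keyR : ∀ w u : V,
      S (ρR (K u) (S w)) + S (ρR (K u) (S w))
        = ρR (K u) (S (S w)) + S (S (ρR (K u) w)) := by
    intro w u
    have e4 := hA (S w) u
    rw [← hNK, hL (K w) u] at e4
    have e2 := congrArg S (hA w u)
    simp only [map_add] at e2
    linear_combination (norm := abel) e2 - e4
  have dualL : ∀ (y : g) (w : V), ρL (N y) (S w)
      = S (ρL (N y) w) + ρL y (S (S w)) - S (ρL y (S w)) := by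
    intro y w
    obtain ⟨u, rfl⟩ := hK.2 y
    linear_combination (norm := abel) hL (K u) w + keyL u w
  have dualR : ∀ (y : g) (w : V), ρR (N y) (S w)
      = S (ρR (N y) w) + ρR y (S (S w)) - S (ρR y (S w)) := by
    intro y w
    obtain ⟨u, rfl⟩ := hK.2 y
    linear_combination (norm := abel) hR (K u) w + keyR w u
  exact ⟨⟨hNijN, dualL, dualR⟩, hKup, ⟨hNijN, dualL, dualR⟩, hNK, hcomp⟩
end

section
/- Let N : g → g be a Nijenhuis operator and K : V → g a Kupershmidt operator for a representation (V, ρ^L, ρ^R) of a Leibniz algebra g. Then N∘K is a Kupershmidt operator for (V, ρ^L, ρ^R) if and only if N([N(K(w)),K(u)] + [K(w),N(K(u))]) = N(K(ρ^L(N(K(w)))u + ρ^R(N(K(u)))w)) + N²(K(ρ^L(K(w))u + ρ^R(K(u))w)) for all w,u ∈ V. -/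
theorem statement10
    {k g V : Type*} [Field k] [AddCommGroup g] [Module k g]
    [AddCommGroup V] [Module k V]
    (b : g →ₗ[k] g →ₗ[k] g) (hb : LeibnizId fun x y => b x y)
    (ρL ρR : g →ₗ[k] V →ₗ[k] V)
    (hrep : RepId (fun x y => b x y) (fun x w => ρL x w) (fun x w => ρR x w))
    (N : g →ₗ[k] g) (hN : NijenhuisOn (fun x y => b x y) ⇑N)
    (K : V →ₗ[k] g) (hK : Kupershmidt (fun x y => b x y) (fun x w => ρL x w) (fun x w => ρR x w) ⇑K) :
    Kupershmidt (fun x y => b x y) (fun x w => ρL x w) (fun x w => ρR x w) (fun v => N (K v)) ↔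
    ∀ w u, N (b (N (K w)) (K u) + b (K w) (N (K u))) =
      N (K (ρL (N (K w)) u + ρR (N (K u)) w)) +
        N (N (K (ρL (K w) u + ρR (K u) w))) := by
  constructor
  · intro h w u
    have h1 := hN (K w) (K u)
    have h2 := h w u
    have h3 := hK w u
    simp only at h1 h2 h3
    rw [h3] at h1
    simp only [map_add, map_sub] at h1 h2 ⊢
    rw [h2, eq_sub_iff_add_eq] at h1
    exact h1.symm
  · intro h w u
    have h1 := hN (K w) (K u)
    have h2 := h w u
    have h3 := hK w u
    simp only at h1 h3 ⊢
    rw [h3] at h1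
    simp only [map_add, map_sub] at h1 h2 ⊢
    rw [h1, h2]
    abel
end

section
/- Let N : g → g be an invertible Nijenhuis operator and K : V → g a Kupershmidt operator for a representation (V, ρ^L, ρ^R) of a Leibniz algebra g, and suppose N∘K is also a Kupershmidt operator for (V, ρ^L, ρ^R). Then K and N∘K are compatible Kupershmidt operators. -/
theorem statement11
    {k g V : Type*} [Field k] [AddCommGroup g] [Module k g]
    [AddCommGroup V] [Module k V]
    (b : g →ₗ[k] g →ₗ[k] g) (hb : LeibnizId fun x y => b x y)
    (ρL ρR : g →ₗ[k] V →ₗ[k] V)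
    (hrep : RepId (fun x y => b x y) (fun x w => ρL x w) (fun x w => ρR x w))
    (N : g →ₗ[k] g) (hN : NijenhuisOn (fun x y => b x y) ⇑N) (hNbij : Function.Bijective ⇑N)
    (K : V →ₗ[k] g) (hK : Kupershmidt (fun x y => b x y) (fun x w => ρL x w) (fun x w => ρR x w) ⇑K)
    (hNK : Kupershmidt (fun x y => b x y) (fun x w => ρL x w) (fun x w => ρR x w) (fun v => N (K v))) :
    Compatible k (fun x y => b x y) (fun x w => ρL x w) (fun x w => ρR x w) ⇑K (fun v => N (K v)) := by
  intro n₁ n₂ u v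
  have h1 := hN (K u) (K v)
  have h2 := hNK u v
  have h3 := hK u v
  simp only [] at h1 h2 h3
  have hc : b (N (K u)) (K v) + b (K u) (N (K v)) =
      K (ρL (N (K u)) v + ρR (N (K v)) u) + N (K (ρL (K u) v + ρR (K v) u)) := by
    apply hNbij.injective
    have h1' : N (b (N (K u)) (K v)) + N (b (K u) (N (K v))) =
        b (N (K u)) (N (K v)) + N (N (b (K u) (K v))) := by
      rw [h1, map_sub, map_add]; abel
    rw [map_add, map_add, h1', h2, h3]
  simp only [map_add, map_smul, LinearMap.add_apply, LinearMap.smul_apply, smul_add] at h2 h3 hc ⊢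
  linear_combination (norm := module) (n₁*n₁) • h3 + (n₁*n₂) • hc + (n₂*n₂) • h2
end

section
/- Let K₁, K₂ : V → g be compatible Kupershmidt operators for a representation (V, ρ^L, ρ^R) of a Leibniz algebra g, and suppose K₂ is invertible (bijective). Then N = K₁∘K₂⁻¹ : g → g is a Nijenhuis operator on g. -/
theorem statement12
    {k g V : Type*} [Field k] [AddCommGroup g] [Module k g]
    [AddCommGroup V] [Module k V]
    (b : g →ₗ[k] g →ₗ[k] g) (hb : LeibnizId fun x y => b x y)
    (ρL ρR : g →ₗ[k] V →ₗ[k] V)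
    (hrep : RepId (fun x y => b x y) (fun x w => ρL x w) (fun x w => ρR x w))
    (K₁ K₂ : V →ₗ[k] g)
    (hK₁ : Kupershmidt (fun x y => b x y) (fun x w => ρL x w) (fun x w => ρR x w) ⇑K₁)
    (hK₂ : Kupershmidt (fun x y => b x y) (fun x w => ρL x w) (fun x w => ρR x w) ⇑K₂)
    (hcomp : Compatible k (fun x y => b x y) (fun x w => ρL x w) (fun x w => ρR x w) ⇑K₁ ⇑K₂)
    (hK₂bij : Function.Bijective ⇑K₂) :
    NijenhuisOn (fun x y => b x y)
      (fun x => K₁ ((LinearEquiv.ofBijective K₂ hK₂bij).symm x)) := by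
  intro x y
  set e := LinearEquiv.ofBijective K₂ hK₂bij with he
  have hcoe : ∀ w : V, e w = K₂ w := fun w => rfl
  have hsymmK : ∀ w : V, e.symm (K₂ w) = w := fun w => by
    rw [← hcoe]; exact e.symm_apply_apply w
  set u := e.symm x with hu
  set v := e.symm y with hv
  have hx : K₂ u = x := by rw [← hcoe]; exact e.apply_symm_apply x
  have hy : K₂ v = y := by rw [← hcoe]; exact e.apply_symm_apply y
  -- mixed identity from compatibility
  have hmix : b (K₁ u) (K₂ v) + b (K₂ u) (K₁ v)
      = K₁ (ρL (K₂ u) v + ρR (K₂ v) u) + K₂ (ρL (K₁ u) v + ρR (K₁ v) u) := by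
    have h := hcomp 1 1 u v
    simp only [one_smul] at h
    have h1 := hK₁ u v
    have h2 := hK₂ u v
    simp only at h h1 h2
    calc b (K₁ u) (K₂ v) + b (K₂ u) (K₁ v)
        = b (K₁ u + K₂ u) (K₁ v + K₂ v) - b (K₁ u) (K₁ v) - b (K₂ u) (K₂ v) := by
          simp only [map_add, LinearMap.add_apply]; abel
      _ = K₁ (ρL (K₁ u + K₂ u) v + ρR (K₁ v + K₂ v) u)
          + K₂ (ρL (K₁ u + K₂ u) v + ρR (K₁ v + K₂ v) u)
          - K₁ (ρL (K₁ u) v + ρR (K₁ v) u) - K₂ (ρL (K₂ u) v + ρR (K₂ v) u) := by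
          rw [h, h1, h2]
      _ = K₁ (ρL (K₂ u) v + ρR (K₂ v) u) + K₂ (ρL (K₁ u) v + ρR (K₁ v) u) := by
          simp only [map_add, LinearMap.add_apply]; abel
  have hbxy : (b x y : g) = K₂ (ρL (K₂ u) v + ρR (K₂ v) u) := by
    rw [← hx, ← hy]; exact hK₂ u v
  have hNbxy : e.symm (b x y) = ρL (K₂ u) v + ρR (K₂ v) u := by
    rw [hbxy, hsymmK]
  show b (K₁ u) (K₁ v)
      = K₁ (e.symm (b (K₁ u) y + b x (K₁ v) - K₁ (e.symm (b x y))))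
  have hkey : b (K₁ u) y + b x (K₁ v) - K₁ (e.symm (b x y))
      = K₂ (ρL (K₁ u) v + ρR (K₁ v) u) := by
    rw [hNbxy, ← hx, ← hy, hmix]; abel
  rw [hkey, hsymmK]
  exact hK₁ u v
end

section
/- Let (K,S,N) be a KN-structure (or a dual KN-structure) for a representation (V, ρ^L, ρ^R) of a Leibniz algebra g. Then K and K∘S are compatible Kupershmidt operators for (V, ρ^L, ρ^R). -/
private lemma key_statement13
    {k g V : Type*} [Field k] [AddCommGroup g] [Module k g]
    [AddCommGroup V] [Module k V]
    (b : g →ₗ[k] g →ₗ[k] g) (ρL ρR : g →ₗ[k] V →ₗ[k] V)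
    (K : V →ₗ[k] g) (S : V →ₗ[k] V) (N : g →ₗ[k] g)
    (hK : ∀ u v, b (K u) (K v) = K (ρL (K u) v + ρR (K v) u))
    (hN : ∀ x y, b (N x) (N y) = N (b (N x) y + b x (N y) - N (b x y)))
    (hNK : ∀ v, N (K v) = K (S v))
    (hstar : ∀ w u, ρL (N (K w)) u + ρR (N (K u)) w =
      (ρL (K (S w)) u + ρR (K u) (S w)) + (ρL (K w) (S u) + ρR (K (S u)) w)
        - S (ρL (K w) u + ρR (K u) w)) :
    Compatible k (fun x y => b x y) (fun x w => ρL x w) (fun x w => ρR x w)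
      ⇑K (fun v => K (S v)) := by
  have hst : ∀ w u', ρL (K (S w)) u' + ρR (K (S u')) w =
      (ρL (K (S w)) u' + ρR (K u') (S w)) + (ρL (K w) (S u') + ρR (K (S u')) w)
        - S (ρL (K w) u' + ρR (K u') w) := by
    intro w u'
    have := hstar w u'
    rwa [hNK, hNK] at this
  intro n₁ n₂ u v
  have hc : b (K u) (K (S v)) + b (K (S u)) (K v)
      = K (ρL (K (S u)) v + ρR (K (S v)) u) + K (S (ρL (K u) v + ρR (K v) u)) := by
    rw [hK u (S v), hK (S u) v, hst u v]
    simp only [map_add, map_sub]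
    abel
  have hb2 : b (K (S u)) (K (S v)) = K (S (ρL (K (S u)) v + ρR (K (S v)) u)) := by
    have h1 : b (K (S u)) (K (S v)) = b (N (K u)) (N (K v)) := by rw [hNK, hNK]
    rw [h1, hN, hNK u, hNK v, hK (S u) v, hK u (S v), hK u v,
        ← map_add K, hNK, ← map_sub K, hNK, hst u v]
  show b (n₁ • K u + n₂ • K (S u)) (n₁ • K v + n₂ • K (S v))
      = n₁ • K (ρL (n₁ • K u + n₂ • K (S u)) v + ρR (n₁ • K v + n₂ • K (S v)) u)
        + n₂ • K (S (ρL (n₁ • K u + n₂ • K (S u)) v + ρR (n₁ • K v + n₂ • K (S v)) u))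
  have ha := hK u v
  simp only [map_add, map_smul, LinearMap.add_apply, LinearMap.smul_apply] at ha hc hb2 ⊢
  linear_combination (norm := module) (n₁*n₁) • ha + (n₁*n₂) • hc + (n₂*n₂) • hb2

theorem statement13
    {k g V : Type*} [Field k] [AddCommGroup g] [Module k g]
    [AddCommGroup V] [Module k V]
    (b : g →ₗ[k] g →ₗ[k] g) (hb : LeibnizId fun x y => b x y)
    (ρL ρR : g →ₗ[k] V →ₗ[k] V)
    (hrep : RepId (fun x y => b x y) (fun x w => ρL x w) (fun x w => ρR x w))
    (K : V →ₗ[k] g) (S : V →ₗ[k] V) (N : g →ₗ[k] g)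
    (hKN : KNStructure (fun x y => b x y) (fun x w => ρL x w) (fun x w => ρR x w) ⇑K ⇑S ⇑N ∨
           DualKNStructure (fun x y => b x y) (fun x w => ρL x w) (fun x w => ρR x w) ⇑K ⇑S ⇑N) :
    Compatible k (fun x y => b x y) (fun x w => ρL x w) (fun x w => ρR x w) ⇑K (fun v => K (S v)) := by
  rcases hKN with ⟨hKup, hPair, hNK, hstar⟩ | ⟨hKup, hPair, hNK, hstar⟩ <;>
    exact key_statement13 b ρL ρR K S N hKup hPair.1 hNK hstar
end

section
/- Let K₁, K₂ : V → g be compatible Kupershmidt operators for a representation (V, ρ^L, ρ^R) of a Leibniz algebra g, and suppose K₁ is invertible (bijective). Set S = K₁⁻¹∘K₂ : V → V and N = K₂∘K₁⁻¹ : g → g. Then (K₁, S, N) is a dual KN-structure for (V, ρ^L, ρ^R). -/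
theorem statement14
    {k g V : Type*} [Field k] [AddCommGroup g] [Module k g]
    [AddCommGroup V] [Module k V]
    (b : g →ₗ[k] g →ₗ[k] g) (hb : LeibnizId fun x y => b x y)
    (ρL ρR : g →ₗ[k] V →ₗ[k] V)
    (hrep : RepId (fun x y => b x y) (fun x w => ρL x w) (fun x w => ρR x w))
    (K₁ K₂ : V →ₗ[k] g)
    (hK₁ : Kupershmidt (fun x y => b x y) (fun x w => ρL x w) (fun x w => ρR x w) ⇑K₁)
    (hK₂ : Kupershmidt (fun x y => b x y) (fun x w => ρL x w) (fun x w => ρR x w) ⇑K₂)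
    (hcomp : Compatible k (fun x y => b x y) (fun x w => ρL x w) (fun x w => ρR x w) ⇑K₁ ⇑K₂)
    (hK₁bij : Function.Bijective ⇑K₁) :
    DualKNStructure (fun x y => b x y) (fun x w => ρL x w) (fun x w => ρR x w) ⇑K₁
      (fun w => (LinearEquiv.ofBijective K₁ hK₁bij).symm (K₂ w))
      (fun x => K₂ ((LinearEquiv.ofBijective K₁ hK₁bij).symm x)) := by
  set E := LinearEquiv.ofBijective K₁ hK₁bij with hE
  have hK1symm : ∀ x : g, K₁ (E.symm x) = x := fun x => E.apply_symm_apply x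
  have hsymmK1 : ∀ v : V, E.symm (K₁ v) = v := fun v =>
    hK₁bij.injective (hK1symm (K₁ v))
  have hstar : ∀ u v : V, b (K₁ u) (K₂ v) + b (K₂ u) (K₁ v)
      = K₁ (ρL (K₂ u) v + ρR (K₂ v) u) + K₂ (ρL (K₁ u) v + ρR (K₁ v) u) := by
    intro u v
    have h := hcomp 1 1 u v
    simp only [one_smul, map_add, LinearMap.add_apply] at h
    have h1 := hK₁ u v
    have h2 := hK₂ u v
    simp only [map_add] at h1 h2 ⊢
    linear_combination (norm := abel) h - h1 - h2
  have hdia : ∀ w u : V, E.symm (K₂ (ρL (K₁ w) u + ρR (K₁ u) w))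
      = ρL (K₁ w) (E.symm (K₂ u)) + ρR (K₁ u) (E.symm (K₂ w)) := by
    intro w u
    apply hK₁bij.injective
    rw [hK1symm]
    have e1 := hK₁ w (E.symm (K₂ u))
    have e2 := hK₁ (E.symm (K₂ w)) u
    rw [hK1symm] at e1 e2
    have e0 := hstar w u
    simp only [map_add] at e0 e1 e2 ⊢
    linear_combination (norm := abel) e1 + e2 - e0
  have hR : ∀ q w : V,
      ρR (K₂ q) (E.symm (K₂ w)) =
        E.symm (K₂ (ρR (K₂ q) w)) + ρR (K₁ q) (E.symm (K₂ (E.symm (K₂ w))))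
          - E.symm (K₂ (ρR (K₁ q) (E.symm (K₂ w)))) := by
    intro q w
    apply hK₁bij.injective
    rw [map_sub, map_add, hK1symm, hK1symm]
    have e3 := hstar (E.symm (K₂ w)) q
    rw [hK1symm] at e3
    have e4 := hK₂ w q
    have e5 := hK₁ (E.symm (K₂ (E.symm (K₂ w)))) q
    rw [hK1symm] at e5
    simp only [map_add] at e3 e4 e5 ⊢
    linear_combination (norm := abel) e4 + e5 - e3
  have hL : ∀ v w : V,
      ρL (K₂ v) (E.symm (K₂ w)) =
        E.symm (K₂ (ρL (K₂ v) w)) + ρL (K₁ v) (E.symm (K₂ (E.symm (K₂ w))))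
          - E.symm (K₂ (ρL (K₁ v) (E.symm (K₂ w)))) := by
    intro v w
    have d1 := hdia (E.symm (K₂ v)) w
    rw [hK1symm] at d1
    have d2 := hdia v (E.symm (K₂ w))
    rw [hK1symm] at d2
    have d3 := hR w v
    simp only [map_add] at d1 d2
    linear_combination (norm := abel) -d1 + d2 + d3
  unfold DualKNStructure DualNijPair NijenhuisOn kbr
  refine ⟨hK₁, ⟨?_, ?_, ?_⟩, ?_, ?_⟩
  · -- Nijenhuis
    intro x y
    obtain ⟨u, rfl⟩ := hK₁bij.surjective x
    obtain ⟨v, rfl⟩ := hK₁bij.surjective y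
    simp only [hsymmK1]
    have hinner : b (K₂ u) (K₁ v) + b (K₁ u) (K₂ v) - K₂ (E.symm (b (K₁ u) (K₁ v)))
        = K₁ (ρL (K₂ u) v + ρR (K₂ v) u) := by
      have h1 : b (K₁ u) (K₁ v) = K₁ (ρL (K₁ u) v + ρR (K₁ v) u) := hK₁ u v
      rw [h1, hsymmK1]
      linear_combination (norm := abel) hstar u v
    rw [hinner, hsymmK1]
    exact hK₂ u v
  · -- dual Nijenhuis ρL condition
    intro y w
    obtain ⟨v, rfl⟩ := hK₁bij.surjective y
    simp only [hsymmK1]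
    exact hL v w
  · -- dual Nijenhuis ρR condition
    intro y w
    obtain ⟨q, rfl⟩ := hK₁bij.surjective y
    simp only [hsymmK1]
    exact hR q w
  · -- N ∘ K = K ∘ S
    intro v
    simp only [hsymmK1]
    exact (hK1symm (K₂ v)).symm
  · -- last compatibility condition
    intro w u
    simp only [hsymmK1, hK1symm]
    rw [hdia w u]
    abel
end

section
/- Let K₁, K₂ : V → g be compatible Kupershmidt operators for a representation (V, ρ^L, ρ^R) of a Leibniz algebra g, and suppose K₁ is invertible (bijective). Set S = K₁⁻¹∘K₂ : V → V and N = K₂∘K₁⁻¹ : g → g. Then (K₂, S, N) is a dual KN-structure for (V, ρ^L, ρ^R). -/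
private lemma csub1 {G : Type*} [AddCommGroup G] {x₁ y₁ X Y : G}
    (h₁ : x₁ = y₁) (h : X - Y = x₁ - y₁) : X = Y := by
  rw [h₁, sub_self] at h; exact sub_eq_zero.mp h

private lemma csub2 {G : Type*} [AddCommGroup G] {x₁ y₁ x₂ y₂ X Y : G}
    (h₁ : x₁ = y₁) (h₂ : x₂ = y₂) (h : X - Y = (x₁ - y₁) + (x₂ - y₂)) : X = Y := by
  rw [h₁, h₂, sub_self, sub_self, add_zero] at h; exact sub_eq_zero.mp h

private lemma csub3 {G : Type*} [AddCommGroup G] {x₁ y₁ x₂ y₂ x₃ y₃ X Y : G}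
    (h₁ : x₁ = y₁) (h₂ : x₂ = y₂) (h₃ : x₃ = y₃)
    (h : X - Y = (x₁ - y₁) + (x₂ - y₂) + (x₃ - y₃)) : X = Y := by
  rw [h₁, h₂, h₃, sub_self, sub_self, sub_self, add_zero, add_zero] at h
  exact sub_eq_zero.mp h

theorem statement15
    {k g V : Type*} [Field k] [AddCommGroup g] [Module k g]
    [AddCommGroup V] [Module k V]
    (b : g →ₗ[k] g →ₗ[k] g) (hb : LeibnizId fun x y => b x y)
    (ρL ρR : g →ₗ[k] V →ₗ[k] V)
    (hrep : RepId (fun x y => b x y) (fun x w => ρL x w) (fun x w => ρR x w))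
    (K₁ K₂ : V →ₗ[k] g)
    (hK₁ : Kupershmidt (fun x y => b x y) (fun x w => ρL x w) (fun x w => ρR x w) ⇑K₁)
    (hK₂ : Kupershmidt (fun x y => b x y) (fun x w => ρL x w) (fun x w => ρR x w) ⇑K₂)
    (hcomp : Compatible k (fun x y => b x y) (fun x w => ρL x w) (fun x w => ρR x w) ⇑K₁ ⇑K₂)
    (hK₁bij : Function.Bijective ⇑K₁) :
    DualKNStructure (fun x y => b x y) (fun x w => ρL x w) (fun x w => ρR x w) ⇑K₂
      (fun w => (LinearEquiv.ofBijective K₁ hK₁bij).symm (K₂ w))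
      (fun x => K₂ ((LinearEquiv.ofBijective K₁ hK₁bij).symm x)) := by

  classical
  have hinj : Function.Injective ⇑K₁ := hK₁bij.injective
  set e := LinearEquiv.ofBijective K₁ hK₁bij with he
  set S : V → V := fun w => e.symm (K₂ w) with hSdef
  set N : g → g := fun x => K₂ (e.symm x) with hNdef
  have hKS : ∀ w, K₁ (S w) = K₂ w := fun w => e.apply_symm_apply (K₂ w)
  have hNK : ∀ v, N (K₁ v) = K₂ v := fun v => congrArg K₂ (e.symm_apply_apply v)
  have hNK₂ : ∀ v, N (K₂ v) = K₂ (S v) := fun v => rfl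
  have hSadd : ∀ a c : V, S (a + c) = S a + S c := by
    intro a c; simp only [hSdef, map_add]
  have hstar : ∀ u v, b (K₁ u) (K₂ v) + b (K₂ u) (K₁ v)
      = K₁ (ρL (K₂ u) v) + K₁ (ρR (K₂ v) u) + K₂ (ρL (K₁ u) v) + K₂ (ρR (K₁ v) u) := by
    intro u v
    have h := hcomp 1 1 u v
    simp only [one_smul, map_add, LinearMap.add_apply] at h
    have h1 : b (K₁ u) (K₁ v) = K₁ (ρL (K₁ u) v) + K₁ (ρR (K₁ v) u) := by
      have h' : b (K₁ u) (K₁ v) = K₁ (ρL (K₁ u) v + ρR (K₁ v) u) := hK₁ u v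
      rw [h', map_add]
    have h2 : b (K₂ u) (K₂ v) = K₂ (ρL (K₂ u) v) + K₂ (ρR (K₂ v) u) := by
      have h' : b (K₂ u) (K₂ v) = K₂ (ρL (K₂ u) v + ρR (K₂ v) u) := hK₂ u v
      rw [h', map_add]
    exact csub3 h h1.symm h2.symm (by abel)
  have hbA : ∀ u v, b (K₁ u) (K₂ v) = K₁ (ρL (K₁ u) (S v)) + K₁ (ρR (K₂ v) u) := by
    intro u v
    have h' : b (K₁ u) (K₁ (S v)) = K₁ (ρL (K₁ u) (S v) + ρR (K₁ (S v)) u) := hK₁ u (S v)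
    rw [hKS] at h'
    rw [h', map_add]
  have hbB : ∀ u v, b (K₂ u) (K₁ v) = K₁ (ρL (K₂ u) v) + K₁ (ρR (K₁ v) (S u)) := by
    intro u v
    have h' : b (K₁ (S u)) (K₁ v) = K₁ (ρL (K₁ (S u)) v + ρR (K₁ v) (S u)) := hK₁ (S u) v
    rw [hKS] at h'
    rw [h', map_add]
  have hQg : ∀ u v, K₁ (ρL (K₁ u) (S v)) + K₁ (ρR (K₁ v) (S u))
      = K₂ (ρL (K₁ u) v) + K₂ (ρR (K₁ v) u) := by
    intro u v
    exact csub3 (hstar u v) (hbA u v).symm (hbB u v).symm (by abel)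
  have hQ : ∀ u v, ρL (K₁ u) (S v) + ρR (K₁ v) (S u)
      = S (ρL (K₁ u) v) + S (ρR (K₁ v) u) := by
    intro u v
    apply hinj
    rw [map_add, map_add, hKS, hKS]
    exact hQg u v
  have hP : ∀ u v, ρL (K₂ u) (S v) + ρR (K₂ v) (S u)
      = S (ρL (K₂ u) v) + S (ρR (K₂ v) u) := by
    intro u v
    apply hinj
    rw [map_add, map_add, hKS, hKS]
    have h1 : b (K₂ u) (K₂ v) = K₁ (ρL (K₂ u) (S v)) + K₁ (ρR (K₂ v) (S u)) := by
      have h' : b (K₁ (S u)) (K₁ (S v)) = K₁ (ρL (K₁ (S u)) (S v) + ρR (K₁ (S v)) (S u)) :=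
        hK₁ (S u) (S v)
      rw [hKS, hKS] at h'
      rw [h', map_add]
    have h2 : b (K₂ u) (K₂ v) = K₂ (ρL (K₂ u) v) + K₂ (ρR (K₂ v) u) := by
      have h' : b (K₂ u) (K₂ v) = K₂ (ρL (K₂ u) v + ρR (K₂ v) u) := hK₂ u v
      rw [h', map_add]
    rw [← h1]
    exact h2
  refine ⟨hK₂, ⟨?_, ?_, ?_⟩, hNK₂, ?_⟩
  · -- Nijenhuis
    intro x y
    obtain ⟨u, rfl⟩ := hK₁bij.surjective x
    obtain ⟨v, rfl⟩ := hK₁bij.surjective y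
    simp only [hNK]
    have hb' : b (K₁ u) (K₁ v) = K₁ (ρL (K₁ u) v + ρR (K₁ v) u) := hK₁ u v
    have hinner : b (K₂ u) (K₁ v) + b (K₁ u) (K₂ v) - N (b (K₁ u) (K₁ v))
        = K₁ (ρL (K₂ u) v + ρR (K₂ v) u) := by
      rw [hbA, hbB, hb', hNK]
      simp only [map_add]
      exact csub1 (hQg u v) (by abel)
    rw [hinner, hNK]
    exact hK₂ u v
  · -- dual pair L
    intro y w
    obtain ⟨v, rfl⟩ := hK₁bij.surjective y
    simp only [hNK]
    have q := hQ v (S w)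
    rw [hKS] at q
    exact csub2 (hP v w) q.symm (by abel)
  · -- dual pair R
    intro y w
    obtain ⟨v, rfl⟩ := hK₁bij.surjective y
    simp only [hNK]
    have q := hQ (S w) v
    rw [hKS] at q
    exact csub2 (hP w v) q.symm (by abel)
  · -- condition 4
    intro w u
    simp only [kbr, hNK₂, hSadd]
    exact csub1 (hP w u).symm (by abel)
end

section
/- Let K : V → g be a Kupershmidt operator for a representation (V, ρ^L, ρ^R) of a Leibniz algebra g, and let Θ : g → V be a solution of the strong Maurer–Cartan equation on the twilled Leibniz algebra g ⋈ V_K, i.e. Θ([y,z]) = ρ^L(y)Θ(z) + ρ^R(z)Θ(y) and [Θ(y),Θ(z)]^K = Θ(ϱ^L_K(Θ(y))z + ϱ^R_K(Θ(z))y) for all y,z ∈ g. Set N = K∘Θ : g → g and S = Θ∘K : V → V. Then (K, S, N) is a dual KN-structure for the representation (V, ρ^L, ρ^R). -/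
theorem statement16
    {k g V : Type*} [Field k] [AddCommGroup g] [Module k g]
    [AddCommGroup V] [Module k V]
    (b : g →ₗ[k] g →ₗ[k] g) (hb : LeibnizId fun x y => b x y)
    (ρL ρR : g →ₗ[k] V →ₗ[k] V)
    (hrep : RepId (fun x y => b x y) (fun x w => ρL x w) (fun x w => ρR x w))
    (K : V →ₗ[k] g) (hK : Kupershmidt (fun x y => b x y) (fun x w => ρL x w) (fun x w => ρR x w) ⇑K)
    (Θ : g →ₗ[k] V)
    (hΘ1 : ∀ y z, Θ (b y z) = ρL y (Θ z) + ρR z (Θ y))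
    (hΘ2 : ∀ y z, kbr (fun x w => ρL x w) (fun x w => ρR x w) ⇑K (Θ y) (Θ z) =
      Θ ((b (K (Θ y)) z - K (ρR z (Θ y))) + (b y (K (Θ z)) - K (ρL y (Θ z))))) :
    DualKNStructure (fun x y => b x y) (fun x w => ρL x w) (fun x w => ρR x w) ⇑K (fun w => Θ (K w)) (fun x => K (Θ x)) := by

  have hK' : ∀ u v, b (K u) (K v) = K (ρL (K u) v + ρR (K v) u) := fun u v => hK u v
  refine ⟨hK, ⟨?_, ?_, ?_⟩, fun v => rfl, ?_⟩
  · -- Nijenhuis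
    intro x y
    have h2 := hΘ2 x y
    simp only [kbr] at h2
    have harg : (b (K (Θ x))) y - K ((ρR y) (Θ x)) + ((b x) (K (Θ y)) - K ((ρL x) (Θ y))) =
        (b (K (Θ x))) y + (b x) (K (Θ y)) - K (Θ ((b x) y)) := by
      rw [hΘ1 x y, map_add]; abel
    beta_reduce
    rw [hK', h2, harg]
  · -- dual L
    intro y w
    have e3 := hΘ2 y (K w)
    simp only [kbr] at e3
    rw [hK' (Θ y) w] at e3
    simp only [map_add, map_sub] at e3
    rw [hΘ1 y (K (Θ (K w)))] at e3
    beta_reduce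
    linear_combination (norm := module) e3
  · -- dual R
    intro y w
    have e3 := hΘ2 (K w) y
    simp only [kbr] at e3
    rw [hK' w (Θ y)] at e3
    simp only [map_add, map_sub] at e3
    rw [hΘ1 (K (Θ (K w))) y] at e3
    beta_reduce
    linear_combination (norm := module) e3
  · -- last condition
    intro w u
    have e := hΘ1 (K w) (K u)
    rw [hK' w u] at e
    simp only [map_add] at e
    simp only [kbr, map_add]
    beta_reduce
    linear_combination (norm := module) e
end

section
/- Let (K,S,N) be a dual KN-structure for a representation (V, ρ^L, ρ^R) of a Leibniz algebra g, with K invertible (bijective). Then Θ := K⁻¹∘N = S∘K⁻¹ : g → V is a solution of the strong Maurer–Cartan equation on the twilled Leibniz algebra g ⋈ V_K, i.e. Θ([y,z]) = ρ^L(y)Θ(z) + ρ^R(z)Θ(y) and [Θ(y),Θ(z)]^K = Θ(ϱ^L_K(Θ(y))z + ϱ^R_K(Θ(z))y) for all y,z ∈ g. -/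
theorem statement17
    {k g V : Type*} [Field k] [AddCommGroup g] [Module k g]
    [AddCommGroup V] [Module k V]
    (b : g →ₗ[k] g →ₗ[k] g) (hb : LeibnizId fun x y => b x y)
    (ρL ρR : g →ₗ[k] V →ₗ[k] V)
    (hrep : RepId (fun x y => b x y) (fun x w => ρL x w) (fun x w => ρR x w))
    (K : V →ₗ[k] g) (S : V →ₗ[k] V) (N : g →ₗ[k] g)
    (hKN : DualKNStructure (fun x y => b x y) (fun x w => ρL x w) (fun x w => ρR x w) ⇑K ⇑S ⇑N)
    (hKbij : Function.Bijective ⇑K)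
    (Θ : g → V) (hΘdef : ∀ x, K (Θ x) = N x) :
    (∀ v, Θ (K v) = S v) ∧
    (∀ y z, Θ (b y z) = ρL y (Θ z) + ρR z (Θ y)) ∧
    (∀ y z, kbr (fun x w => ρL x w) (fun x w => ρR x w) ⇑K (Θ y) (Θ z) =
      Θ ((b (K (Θ y)) z - K (ρR z (Θ y))) + (b y (K (Θ z)) - K (ρL y (Θ z))))) := by
  obtain ⟨hK, ⟨hNij, hLc, hRc⟩, hNK, h4⟩ := hKN
  have hinj := hKbij.1
  have part1 : ∀ v, Θ (K v) = S v := fun v => hinj (by rw [hΘdef, hNK])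
  have part2 : ∀ y z, Θ (b y z) = ρL y (Θ z) + ρR z (Θ y) := by
    intro y z
    obtain ⟨w, hw⟩ := hKbij.2 y
    obtain ⟨u, hu⟩ := hKbij.2 z
    have hSw : S w = Θ y := by rw [← hw, part1]
    have hSu : S u = Θ z := by rw [← hu, part1]
    have h := h4 w u
    simp only [kbr] at h
    rw [hw, hu, hSw, hSu, hΘdef, hΘdef] at h
    have hS : S (ρL y u + ρR z w) =
        ((ρL (N y) u + ρR z (Θ y)) + (ρL y (Θ z) + ρR (N z) w)) -
          (ρL (N y) u + ρR (N z) w) := by rw [h]; abel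
    have hS' : S (ρL y u + ρR z w) = ρL y (Θ z) + ρR z (Θ y) := by rw [hS]; abel
    apply hinj
    rw [hΘdef, ← hS', ← hNK]
    congr 1
    rw [← hw, ← hu]
    exact hK w u
  refine ⟨part1, part2, ?_⟩
  intro y z
  apply hinj
  have e1 : K (kbr (fun x w => ρL x w) (fun x w => ρR x w) ⇑K (Θ y) (Θ z)) =
      b (N y) (N z) := by
    have h5 := (hK (Θ y) (Θ z)).symm
    simp only [kbr]
    rw [h5, hΘdef, hΘdef]
  have e2 : (b (K (Θ y)) z - K (ρR z (Θ y))) + (b y (K (Θ z)) - K (ρL y (Θ z))) =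
      b (N y) z + b y (N z) - N (b y z) := by
    rw [hΘdef, hΘdef]
    have h3 : K (ρL y (Θ z)) + K (ρR z (Θ y)) = N (b y z) := by
      rw [← map_add, ← part2, hΘdef]
    rw [← h3]; abel
  rw [e1, hΘdef, e2]
  exact hNij y z
end

section
/- Let K : V → g be a Kupershmidt operator for a representation (V, ρ^L, ρ^R) of a Leibniz algebra g, and let Θ : g → V be a solution of the strong Maurer–Cartan equation on the twilled Leibniz algebra g ⋈ V_K, i.e. Θ([y,z]) = ρ^L(y)Θ(z) + ρ^R(z)Θ(y) and [Θ(y),Θ(z)]^K = Θ(ϱ^L_K(Θ(y))z + ϱ^R_K(Θ(z))y) for all y,z ∈ g. Then K∘Θ∘K : V → g is a Kupershmidt operator for (V, ρ^L, ρ^R), and K and K∘Θ∘K are compatible Kupershmidt operators. -/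
theorem statement18
    {k g V : Type*} [Field k] [AddCommGroup g] [Module k g]
    [AddCommGroup V] [Module k V]
    (b : g →ₗ[k] g →ₗ[k] g) (hb : LeibnizId fun x y => b x y)
    (ρL ρR : g →ₗ[k] V →ₗ[k] V)
    (hrep : RepId (fun x y => b x y) (fun x w => ρL x w) (fun x w => ρR x w))
    (K : V →ₗ[k] g) (hK : Kupershmidt (fun x y => b x y) (fun x w => ρL x w) (fun x w => ρR x w) ⇑K)
    (Θ : g →ₗ[k] V)
    (hΘ1 : ∀ y z, Θ (b y z) = ρL y (Θ z) + ρR z (Θ y))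
    (hΘ2 : ∀ y z, kbr (fun x w => ρL x w) (fun x w => ρR x w) ⇑K (Θ y) (Θ z) =
      Θ ((b (K (Θ y)) z - K (ρR z (Θ y))) + (b y (K (Θ z)) - K (ρL y (Θ z))))) :
    Kupershmidt (fun x y => b x y) (fun x w => ρL x w) (fun x w => ρR x w) (fun v => K (Θ (K v))) ∧
    Compatible k (fun x y => b x y) (fun x w => ρL x w) (fun x w => ρR x w) ⇑K (fun v => K (Θ (K v))) := by
  have hK' : ∀ a c : V, b (K a) (K c) = K (ρL (K a) c + ρR (K c) a) := hK
  have key : ∀ u v : V, b (K (Θ (K u))) (K v) - K (ρR (K v) (Θ (K u)))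
      = K (ρL (K (Θ (K u))) v) := by
    intro u v
    rw [hK' (Θ (K u)) v, map_add]
    abel
  have key2 : ∀ u v : V, b (K u) (K (Θ (K v))) - K (ρL (K u) (Θ (K v)))
      = K (ρR (K (Θ (K v))) u) := by
    intro u v
    rw [hK' u (Θ (K v)), map_add]
    abel
  have hT : ∀ u v : V, b (K (Θ (K u))) (K (Θ (K v)))
      = K (Θ (K (ρL (K (Θ (K u))) v + ρR (K (Θ (K v))) u))) := by
    intro u v
    rw [hK' (Θ (K u)) (Θ (K v))]
    have h2 := hΘ2 (K u) (K v)
    unfold kbr at h2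
    rw [h2]
    congr 2
    rw [map_add K]
    rw [← key u v, ← key2 u v]
  refine ⟨hT, ?_⟩
  have hcross : ∀ u v : V, b (K u) (K (Θ (K v))) + b (K (Θ (K u))) (K v)
      = K (ρL (K (Θ (K u))) v + ρR (K (Θ (K v))) u)
        + K (Θ (K (ρL (K u) v + ρR (K v) u))) := by
    intro u v
    have h3 : K (Θ (K (ρL (K u) v + ρR (K v) u))) = K (ρL (K u) (Θ (K v))) + K (ρR (K v) (Θ (K u))) := by
      rw [← hK' u v, hΘ1 (K u) (K v), map_add]
    rw [h3, map_add K, ← key u v, ← key2 u v]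
    abel
  intro n₁ n₂ u v
  have e1 := hK' u v
  have e2 := hcross u v
  have e3 := hT u v
  simp only [map_add, map_smul, LinearMap.add_apply, LinearMap.smul_apply] at e1 e2 e3 ⊢
  linear_combination (norm := module) (n₁*n₁) • e1 + (n₁*n₂) • e2 + (n₂*n₂) • e3
end
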